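/- Let p be an odd prime and let s ∈ {1, 2} and let x be an integer. Then $\delta_{s,2}\,\delta_{p,3} + \sum_{n=1}^{p-1} \frac{D_n(x)}{n^s} \equiv \sum_{k=1}^{(p-1)/2} \frac{(-x)^k}{k^s} \pmod{p}$, where $1/n^s$ and $1/k^s$ denote inverses mod p, and $\delta_{a,b}$ is 1 if a = b and 0 otherwise. -/

import Mathlib

/-- The Delannoy polynomial `D_n(x)` at an integer `x`. -/
def delannoyPoly (n : ℕ) (x : ℤ) : ℤ :=
  ∑ k ∈ Finset.range (n + 1), (n.choose k * (n + k).choose k : ℤ) * x ^ k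

/-!
Write `D_n(x) = ∑_k C(n+k, 2k) C(2k, k) x^k` and exchange the sums over `n` and `k`. For
`(p-1)/2 < k < p` the factor `C(2k, k)` vanishes mod `p`, and the `k = 0` term is the harmonic sum
`∑ 1/n^s`, which vanishes unless `s = p - 1`, i.e. `s = 2, p = 3`. For `1 ≤ k ≤ (p-1)/2`,
`(2k)! C(n+k, 2k) = n (n+k) ∏_{0<j<k} (n² - j²) = n G_k(n)` with `deg G_k < p - 1`
(`G_k = descPochhammerShiftDivX k`). Since `∑_{n=1}^{p-1} n^i ≡ -[p - 1 ∣ i]`, the sum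
`∑_n G_k(n)/n^t` is minus the coefficient of `X^t` in `G_k`, and the two lowest coefficients
`k (-1)^(k-1) (k-1)!²` and `(-1)^(k-1) (k-1)!²` give `C(2k, k) ∑_n C(n+k, 2k)/n^s ≡ (-1)^k/k^s`.
-/

open Finset Polynomial
open scoped Nat

namespace ZMod

theorem natCast_ne_zero_of_lt {p n : ℕ} (hn0 : n ≠ 0) (hnp : n < p) : (n : ZMod p) ≠ 0 :=
  fun h => hn0 (Nat.eq_zero_of_dvd_of_lt ((natCast_eq_zero_iff n p).1 h) hnp)

variable {p : ℕ} [Fact p.Prime]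

theorem natCast_factorial_ne_zero {m : ℕ} (hm : m < p) : (m ! : ZMod p) ≠ 0 := by
  rw [Ne, natCast_eq_zero_iff, (Fact.out : p.Prime).dvd_factorial]
  omega

theorem sum_Icc_natCast_eq_sum_units {M : Type*} [AddCommMonoid M] (f : ZMod p → M) :
    ∑ n ∈ Icc 1 (p - 1), f n = ∑ u : (ZMod p)ˣ, f u := by
  have hp := (Fact.out : p.Prime).one_lt
  refine sum_bij' (fun n hn => Units.mk0 (n : ZMod p) ?_) (fun u _ => (u : ZMod p).val)
    (fun _ _ => mem_univ _) (fun u _ => ?_) (fun n hn => ?_) (fun u _ => ?_) (fun _ _ => rfl)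
  · rw [mem_Icc] at hn
    exact natCast_ne_zero_of_lt (by omega) (by omega)
  · have := (u : ZMod p).val_lt
    have := (val_ne_zero _).2 u.ne_zero
    rw [mem_Icc]; omega
  · rw [mem_Icc] at hn
    simp [val_cast_of_lt (show n < p by omega)]
  · ext; simp

theorem sum_units_pow_div_pow (j : ℕ) {t : ℕ} (ht : t ≤ p - 1) :
    ∑ u : (ZMod p)ˣ, (u : ZMod p) ^ j / (u : ZMod p) ^ t =
      if p - 1 ∣ j + (p - 1 - t) then -1 else 0 := by
  have hpow (u : (ZMod p)ˣ) :
      (u : ZMod p) ^ j / (u : ZMod p) ^ t = (u : ZMod p) ^ (j + (p - 1 - t)) := by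
    rw [div_eq_iff (pow_ne_zero _ u.ne_zero), ← pow_add, add_assoc, Nat.sub_add_cancel ht,
      pow_add, pow_card_sub_one_eq_one u.ne_zero, mul_one]
  simp_rw [hpow]
  rw [FiniteField.sum_pow_units, ZMod.card]

theorem sum_Icc_eval_div_pow (Q : (ZMod p)[X]) {t : ℕ} (ht : t < p - 1)
    (hQ : Q.natDegree < p - 1 + t) :
    ∑ n ∈ Icc 1 (p - 1), Q.eval (n : ZMod p) / (n : ZMod p) ^ t = -Q.coeff t := by
  have hdvd {j : ℕ} (hj : j < p - 1 + t) : p - 1 ∣ j + (p - 1 - t) ↔ j = t :=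
    ⟨fun h => by have := Nat.eq_of_dvd_of_lt_two_mul (by omega) h (by omega); omega,
      fun h => by rw [h, Nat.add_sub_cancel' ht.le]⟩
  rw [sum_Icc_natCast_eq_sum_units (fun y => Q.eval y / y ^ t)]
  simp only [eval_eq_sum_range, sum_div, mul_div_assoc]
  rw [sum_comm]
  simp only [← mul_sum]
  rw [sum_congr rfl fun j hj => by
    rw [sum_units_pow_div_pow j ht.le, if_congr (hdvd (by simp at hj; omega)) rfl rfl]]
  simp only [mul_ite, mul_neg, mul_one, mul_zero, sum_ite_eq', mem_range]
  split_ifs with h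
  · rfl
  · rw [coeff_eq_zero_of_natDegree_lt (by omega), neg_zero]

theorem sum_Icc_one_div_pow {s : ℕ} (hs0 : s ≠ 0) (hs : s ≤ p - 1) :
    ∑ n ∈ Icc 1 (p - 1), 1 / (n : ZMod p) ^ s = if s = p - 1 then -1 else 0 := by
  rw [sum_Icc_natCast_eq_sum_units (fun y => 1 / y ^ s)]
  have h := sum_units_pow_div_pow (p := p) 0 hs
  simp only [pow_zero, zero_add, Nat.dvd_sub_self_left] at h
  rw [h]
  exact if_congr (by omega) rfl rfl

end ZMod

section

variable (R : Type*) [CommRing R]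

/-- The even factor is written with `expand` so that its odd coefficients visibly vanish. -/
noncomputable def descPochhammerShiftDivX (k : ℕ) : R[X] :=
  (X + C (k : R)) * expand R 2 (∏ j ∈ Ico 1 k, (X - C ((j : R) ^ 2)))

variable {R}

theorem descPochhammerShiftDivX_eval (k : ℕ) (y : R) :
    (descPochhammerShiftDivX R k).eval y = (y + k) * ∏ j ∈ Ico 1 k, (y ^ 2 - (j : R) ^ 2) := by
  simp [descPochhammerShiftDivX, eval_prod]

theorem descPochhammer_eval_add_natCast {k : ℕ} (hk : 1 ≤ k) (y : R) :
    (descPochhammer R (2 * k)).eval (y + k) = y * (descPochhammerShiftDivX R k).eval y := by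
  induction k, hk using Nat.le_induction with
  | base => simp [descPochhammerShiftDivX_eval, descPochhammer_succ_eval]; ring
  | succ k hk ih =>
    rw [show 2 * (k + 1) = 2 * k + 1 + 1 by ring, descPochhammer_succ_left, eval_mul, eval_X,
      eval_comp, descPochhammer_succ_eval]
    simp only [eval_sub, eval_X, eval_one, Nat.cast_add, Nat.cast_one, Nat.cast_mul, Nat.cast_ofNat]
    rw [show y + (k + 1) - 1 = y + k by ring, ih, descPochhammerShiftDivX_eval,
      descPochhammerShiftDivX_eval, prod_Ico_succ_top hk]
    push_cast
    ring

theorem natDegree_descPochhammerShiftDivX_lt {k : ℕ} (hk : 1 ≤ k) :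
    (descPochhammerShiftDivX R k).natDegree < 2 * k := by
  have hprod : (∏ j ∈ Ico 1 k, (X - C ((j : R) ^ 2))).natDegree ≤ k - 1 := by
    refine (natDegree_prod_le _ _).trans ?_
    refine (sum_le_card_nsmul _ _ 1 fun j _ => natDegree_X_sub_C_le _).trans ?_
    simp
  calc (descPochhammerShiftDivX R k).natDegree
      ≤ (X + C (k : R)).natDegree + (∏ j ∈ Ico 1 k, (X - C ((j : R) ^ 2))).natDegree * 2 :=
        (natDegree_mul_le ..).trans (by rw [natDegree_expand])
    _ ≤ 1 + (k - 1) * 2 := by gcongr; exact (natDegree_add_le _ _).trans (by simp [natDegree_X_le])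
    _ < 2 * k := by omega

theorem descPochhammerShiftDivX_coeff_zero (k : ℕ) :
    (descPochhammerShiftDivX R k).coeff 0 = k * ∏ j ∈ Ico 1 k, -(j : R) ^ 2 := by
  simp [descPochhammerShiftDivX, coeff_zero_eq_eval_zero, eval_prod]

theorem descPochhammerShiftDivX_coeff_one (k : ℕ) :
    (descPochhammerShiftDivX R k).coeff 1 = ∏ j ∈ Ico 1 k, -(j : R) ^ 2 := by
  rw [descPochhammerShiftDivX, add_mul, coeff_add, coeff_X_mul, coeff_C_mul, coeff_expand two_pos,
    coeff_expand two_pos]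
  simp [coeff_zero_eq_eval_zero, eval_prod]

theorem prod_Ico_one_neg_sq (m : ℕ) :
    ∏ j ∈ Ico 1 (m + 1), -(j : R) ^ 2 = (-1) ^ m * (m ! : R) ^ 2 := by
  rw [prod_neg, prod_pow, ← Nat.cast_prod, prod_Ico_id_eq_factorial, Nat.card_Ico,
    Nat.add_sub_cancel]

theorem natCast_choose_mul_factorial_eq_mul_eval (n : ℕ) {k : ℕ} (hk : 1 ≤ k) :
    (((n + k).choose (2 * k) * (2 * k)! : ℕ) : R) =
      n * (descPochhammerShiftDivX R k).eval (n : R) := by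
  rw [← descPochhammer_eval_add_natCast hk, ← Nat.cast_add, descPochhammer_eval_eq_descFactorial,
    Nat.descFactorial_eq_factorial_mul_choose, mul_comm]

end

namespace ZMod

variable {p : ℕ} [Fact p.Prime]

theorem choose_two_mul_eq_zero {k : ℕ} (hk : p ≤ 2 * k) (hkp : k < p) :
    ((2 * k).choose k : ZMod p) = 0 := by
  rw [natCast_eq_zero_iff, two_mul]
  exact (Fact.out : p.Prime).dvd_choose_add hkp hkp (by omega)

theorem sum_Icc_choose_div_pow_succ {k t : ℕ} (hk : 1 ≤ k) (hkp : 2 * k < p) (ht : t < p - 1) :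
    ∑ n ∈ Icc 1 (p - 1), ((n + k).choose (2 * k) : ZMod p) / (n : ZMod p) ^ (t + 1) =
      -(descPochhammerShiftDivX (ZMod p) k).coeff t / (2 * k)! := by
  have hterm (n : ℕ) (hn : n ∈ Icc 1 (p - 1)) :
      ((n + k).choose (2 * k) : ZMod p) / (n : ZMod p) ^ (t + 1) =
        (descPochhammerShiftDivX (ZMod p) k).eval (n : ZMod p) / (n : ZMod p) ^ t / (2 * k)! := by
    rw [mem_Icc] at hn
    have hn0 : (n : ZMod p) ≠ 0 := natCast_ne_zero_of_lt (by omega) (by omega)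
    have h := natCast_choose_mul_factorial_eq_mul_eval (R := ZMod p) n hk
    push_cast at h
    rw [eq_div_iff (natCast_factorial_ne_zero hkp), div_mul_eq_mul_div, h, pow_succ]
    field_simp
  rw [sum_congr rfl hterm, ← sum_div, sum_Icc_eval_div_pow _ ht
    ((natDegree_descPochhammerShiftDivX_lt (by omega)).trans_le (by omega))]

theorem natCast_choose_two_mul {k : ℕ} (hkp : 2 * k < p) :
    ((2 * k).choose k : ZMod p) = (2 * k)! / (k ! : ZMod p) ^ 2 := by
  rw [eq_div_iff (pow_ne_zero _ (natCast_factorial_ne_zero (by omega))),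
    ← Nat.choose_mul_factorial_mul_factorial (show k ≤ 2 * k by omega), show 2 * k - k = k by omega]
  push_cast
  ring

theorem choose_two_mul_mul_sum_Icc_choose_div_pow {k s : ℕ} (hk : 1 ≤ k) (hkp : 2 * k < p)
    (hs : s = 1 ∨ s = 2) :
    ((2 * k).choose k : ZMod p) *
        ∑ n ∈ Icc 1 (p - 1), ((n + k).choose (2 * k) : ZMod p) / (n : ZMod p) ^ s =
      (-1) ^ k / (k : ZMod p) ^ s := by
  obtain ⟨m, rfl⟩ : ∃ m, k = m + 1 := ⟨k - 1, by omega⟩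
  have hm : (m ! : ZMod p) ≠ 0 := natCast_factorial_ne_zero (by omega)
  have h2k := natCast_factorial_ne_zero hkp
  rw [natCast_choose_two_mul hkp, Nat.factorial_succ, Nat.cast_mul]
  rcases hs with rfl | rfl
  · rw [sum_Icc_choose_div_pow_succ (t := 0) hk hkp (by omega), descPochhammerShiftDivX_coeff_zero,
      prod_Ico_one_neg_sq]
    field_simp
    ring
  · rw [sum_Icc_choose_div_pow_succ (t := 1) hk hkp (by omega), descPochhammerShiftDivX_coeff_one,
      prod_Ico_one_neg_sq]
    field_simp
    ring

end ZMod

theorem Nat.choose_mul_add_choose (n k : ℕ) :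
    n.choose k * (n + k).choose k = (n + k).choose (2 * k) * (2 * k).choose k := by
  rw [Nat.choose_mul (show k ≤ 2 * k by omega), Nat.add_sub_cancel, show 2 * k - k = k by omega,
    mul_comm]

theorem delannoyPoly_eq_sum_range {n N : ℕ} (hn : n < N) (x : ℤ) :
    delannoyPoly n x = ∑ k ∈ range N, ((n + k).choose (2 * k) * (2 * k).choose k : ℤ) * x ^ k := by
  rw [delannoyPoly, sum_subset (range_subset_range.2 hn) fun k _ hk => by
    rw [Nat.choose_eq_zero_of_lt (by simpa using hk)]; simp]
  exact sum_congr rfl fun k _ => by rw [← Nat.cast_mul, Nat.choose_mul_add_choose, Nat.cast_mul]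

theorem sum_delannoyPoly_mul {R : Type*} [CommRing R] {S : Finset ℕ} {N : ℕ} (hS : ∀ n ∈ S, n < N)
    (x : ℤ) (w : ℕ → R) :
    ∑ n ∈ S, (delannoyPoly n x : R) * w n =
      ∑ k ∈ range N, ((2 * k).choose k : R) * x ^ k *
        ∑ n ∈ S, ((n + k).choose (2 * k) : R) * w n := by
  rw [sum_congr rfl fun n hn => by rw [delannoyPoly_eq_sum_range (hS n hn)]]
  push_cast
  simp_rw [sum_mul, mul_sum]
  rw [sum_comm]
  exact sum_congr rfl fun _ _ => sum_congr rfl fun _ _ => by ring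

theorem sun_3_4 (p : ℕ) (hp : p.Prime) (hodd : Odd p) (s : ℕ) (hs : s = 1 ∨ s = 2) (x : ℤ) :
    (if s = 2 ∧ p = 3 then (1 : ZMod p) else 0) +
        ∑ n ∈ Finset.Icc 1 (p - 1), (delannoyPoly n x : ZMod p) * ((n : ZMod p) ^ s)⁻¹ =
      ∑ k ∈ Finset.Icc 1 ((p - 1) / 2), ((-x : ℤ) ^ k : ZMod p) * ((k : ZMod p) ^ s)⁻¹ := by
  have := Fact.mk hp
  have hp3 : 3 ≤ p := by obtain ⟨r, rfl⟩ := hodd; have := hp.two_le; omega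
  have hsub : insert 0 (Icc 1 ((p - 1) / 2)) ⊆ range p := fun k hk => by
    simp only [mem_insert, mem_Icc, mem_range] at hk ⊢; omega
  have hvanish : ∀ k ∈ range p, k ∉ insert 0 (Icc 1 ((p - 1) / 2)) →
      ((2 * k).choose k : ZMod p) * (x : ZMod p) ^ k *
        ∑ n ∈ Icc 1 (p - 1), ((n + k).choose (2 * k) : ZMod p) * ((n : ZMod p) ^ s)⁻¹ = 0 := by
    intro k hk hk'
    simp only [mem_insert, mem_Icc, mem_range] at hk hk'
    rw [ZMod.choose_two_mul_eq_zero (by omega) hk, zero_mul, zero_mul]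
  have hharmonic : ∑ n ∈ Icc 1 (p - 1), ((n : ZMod p) ^ s)⁻¹ = -if s = 2 ∧ p = 3 then 1 else 0 := by
    have hiff : s = p - 1 ↔ s = 2 ∧ p = 3 := by omega
    simp only [inv_eq_one_div]
    rw [ZMod.sum_Icc_one_div_pow (by omega) (by omega), if_congr hiff rfl rfl]
    split_ifs <;> simp
  rw [sum_delannoyPoly_mul (N := p) (fun n hn => by rw [mem_Icc] at hn; omega),
    ← sum_subset hsub hvanish, sum_insert (by simp)]
  simp only [mul_zero, Nat.choose_self, Nat.choose_zero_right, add_zero, Nat.cast_one, pow_zero,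
    one_mul, hharmonic, add_neg_cancel_left]
  refine sum_congr rfl fun k hk => ?_
  rw [mem_Icc] at hk
  have hk_term := ZMod.choose_two_mul_mul_sum_Icc_choose_div_pow (p := p) hk.1 (by omega) hs
  simp only [div_eq_mul_inv] at hk_term
  rw [mul_right_comm, hk_term]
  push_cast
  ring
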